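/- arXiv:1603.08420 — 4 statements merged into one kernel-verified Lean document; each statement's English description precedes it below -/
import Mathlib

section
/- For every nonnegative integer a, there exist positive rational numbers p, q, r with p·q·r = 1 and p + q + r = a² + 5. -/
theorem stmt_5 (a : ℕ) :
    ∃ p q r : ℚ, 0 < p ∧ 0 < q ∧ 0 < r ∧ p * q * r = 1 ∧
      p + q + r = (a : ℚ)^2 + 5 := by
  set x : ℚ := 2
  set y : ℚ := (a:ℚ)^2 + a + 1
  set z : ℚ := (a:ℚ)^2 - a + 1
  have ha : (0:ℚ) ≤ a := Nat.cast_nonneg a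
  have hx : 0 < x := by norm_num
  have hy : 0 < y := by positivity
  have hz : 0 < z := by show 0 < (a:ℚ)^2 - a + 1; nlinarith [sq_nonneg ((a:ℚ) - 1)]
  refine ⟨x^2/(y*z), y^2/(x*z), z^2/(x*y), by positivity, by positivity, by positivity, ?_, ?_⟩
  · field_simp
  · field_simp
    ring
end

section
/- For every nonnegative integer a, there exist positive rational numbers p, q, r with p·q·r = 1 and p + q + r = (a² + 33)/2. -/
theorem stmt_6 (a : ℕ) :
    ∃ p q r : ℚ, 0 < p ∧ 0 < q ∧ 0 < r ∧ p * q * r = 1 ∧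
      p + q + r = ((a : ℚ)^2 + 33) / 2 := by
  have ha : (0:ℚ) ≤ (a:ℚ) := Nat.cast_nonneg a
  set A : ℚ := (a:ℚ) with hA
  have hx : (0:ℚ) < (A^2 + 147)/4 := by positivity
  have hy : (0:ℚ) < (A^4 + 6*A^3 + 36*A^2 + 98*A + 147)/16 := by
    have : (0:ℚ) < A^4 + 6*A^3 + 36*A^2 + 98*A + 147 := by positivity
    linarith
  have hz : (0:ℚ) < (A^4 - 6*A^3 + 36*A^2 - 98*A + 147)/16 := by
    have : (0:ℚ) < A^4 - 6*A^3 + 36*A^2 - 98*A + 147 := by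
      nlinarith [sq_nonneg (A^2 - 3*A), sq_nonneg (3*A - 5), sq_nonneg A]
    linarith
  set x : ℚ := (A^2 + 147)/4
  set y : ℚ := (A^4 + 6*A^3 + 36*A^2 + 98*A + 147)/16
  set z : ℚ := (A^4 - 6*A^3 + 36*A^2 - 98*A + 147)/16
  refine ⟨x^2/(y*z), y^2/(x*z), z^2/(x*y), by positivity, by positivity, by positivity, ?_, ?_⟩
  · field_simp
  · have hx' := hx.ne'
    have hy' := hy.ne'
    have hz' := hz.ne'
    field_simp
    simp only [x, y, z, hA]
    ring
end

section
/- There is no integer m ≥ 50 such that both m - 15 and 2m - 99 are of the form 4^k·(8t + 7) for nonnegative integers k, t. -/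
theorem stmt_7 :
    ¬ ∃ m : ℤ, 50 ≤ m ∧
      (∃ k t : ℕ, m - 15 = 4^k * (8 * t + 7)) ∧
      (∃ k t : ℕ, 2 * m - 99 = 4^k * (8 * t + 7)) := by
  rintro ⟨m, hm, ⟨k1, t1, h1⟩, ⟨k2, t2, h2⟩⟩
  rcases k2 with _ | k2
  · simp only [pow_zero, one_mul] at h2
    rcases k1 with _ | k1
    · simp only [pow_zero, one_mul] at h1
      omega
    · have h4 : (4:ℤ) ∣ m - 15 := ⟨4^k1 * (8*t1+7), by rw [h1, pow_succ]; ring⟩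
      obtain ⟨c, hc⟩ := h4
      omega
  · have h2d : (2:ℤ) ∣ 2*m - 99 := ⟨2 * 4^k2 * (8*t2+7), by rw [h2, pow_succ]; ring⟩
    obtain ⟨c, hc⟩ := h2d
    omega
end

section
/- For every integer m ≥ 50, either m - 15 is a sum of three squares of nonnegative integers, or 2m - 99 is a sum of three squares of nonnegative integers. -/
/-!
A positive definite integral ternary form `Q` of determinant 1 is equivalent to
`x² + y² + z²`. A unimodular change of variables moves a primitive minimal vector of `Q` to
`e₀`, so `a = Q(e₀)` is the minimum of `Q`. Completing the square,
`a Q(x, y, z) = (a x + …)² + H(y, z)` with `H` binary of determinant `a`; rounding `x` gives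
`H ≥ 3a²/4` away from `0`, while Lagrange's bound says that the minimum `μ` of `H` satisfies
`3μ² ≤ 4a`. Hence `a = 1`, and by the same argument `H` of determinant 1 is `u² + v²`.

Thus `n` is a sum of three squares as soon as it is represented by such a form, e.g. by
`n x² + 2xy + k y² - 2s yz + N z²` with `N = nD - 1` and `Nk = s² + D`. When `n ≡ 1, 2 (mod 4)`
or `n ≡ 3 (mod 8)`, Dirichlet's theorem supplies a prime `p ≡ 1 (mod 4)` with `N = p` or
`N = 2p`, and quadratic reciprocity makes `-D` a square modulo `N`.
Finally `m - 15 ≡ 1, 2 (mod 4)` if `m ≡ 0, 1 (mod 4)`, and otherwise `2m - 99 ≡ 1 (mod 4)` or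
`2m - 99 ≡ 3 (mod 8)`.
-/

open Matrix

namespace Matrix

section CommRing

variable {n R : Type*} [Fintype n] [CommRing R]

theorem smul_dotProduct_mulVec_smul (A : Matrix n n R) (t : R) (v : n → R) :
    t • v ⬝ᵥ A *ᵥ (t • v) = t ^ 2 * (v ⬝ᵥ A *ᵥ v) := by
  rw [mulVec_smul, smul_dotProduct, dotProduct_smul, smul_eq_mul, smul_eq_mul]
  ring

theorem dotProduct_transpose_mul_mul_mulVec (A U : Matrix n n R) (w : n → R) :
    w ⬝ᵥ (Uᵀ * A * U) *ᵥ w = U *ᵥ w ⬝ᵥ A *ᵥ (U *ᵥ w) := by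
  rw [← mulVec_mulVec, ← mulVec_mulVec, dotProduct_mulVec, vecMul_transpose]

theorem single_one_dotProduct_mulVec_single_one [DecidableEq n] (M : Matrix n n R) (i j : n) :
    Pi.single i 1 ⬝ᵥ M *ᵥ Pi.single j 1 = M i j := by
  simp

theorem dotProduct_mulVec_fin_two (A : Matrix (Fin 2) (Fin 2) R) (w : Fin 2 → R) :
    w ⬝ᵥ A *ᵥ w = A 0 0 * w 0 ^ 2 + (A 0 1 + A 1 0) * w 0 * w 1 + A 1 1 * w 1 ^ 2 := by
  simp only [dotProduct, mulVec, Fin.sum_univ_two]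
  ring

theorem dotProduct_mulVec_fin_three (A : Matrix (Fin 3) (Fin 3) R) (w : Fin 3 → R) :
    w ⬝ᵥ A *ᵥ w = A 0 0 * w 0 ^ 2 + A 1 1 * w 1 ^ 2 + A 2 2 * w 2 ^ 2
      + (A 0 1 + A 1 0) * w 0 * w 1 + (A 0 2 + A 2 0) * w 0 * w 2
      + (A 1 2 + A 2 1) * w 1 * w 2 := by
  simp only [dotProduct, mulVec, Fin.sum_univ_three]
  ring

variable [DecidableEq n] {U : Matrix n n R}

theorem det_transpose_mul_mul_of_det_eq_one (hU : U.det = 1) (A : Matrix n n R) :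
    (Uᵀ * A * U).det = A.det := by
  simp [det_mul, hU]

theorem dotProduct_transpose_mul_mul_mulVec_inv (hU : U.det = 1) (A : Matrix n n R)
    (v : n → R) : U⁻¹ *ᵥ v ⬝ᵥ (Uᵀ * A * U) *ᵥ (U⁻¹ *ᵥ v) = v ⬝ᵥ A *ᵥ v := by
  rw [dotProduct_transpose_mul_mul_mulVec, mulVec_mulVec, mul_nonsing_inv _ (by simp [hU]),
    one_mulVec]

theorem mulVec_ne_zero_of_det_eq_one (hU : U.det = 1) {w : n → R} (hw : w ≠ 0) :
    U *ᵥ w ≠ 0 := by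
  intro h
  apply hw
  rw [← one_mulVec w, ← nonsing_inv_mul U (by simp [hU]), ← mulVec_mulVec, h, mulVec_zero]

end CommRing

theorem transpose_mul_mul_apply_le_of_col_eq {n : Type*} [Fintype n] [DecidableEq n]
    {A U : Matrix n n ℤ} {v : n → ℤ} (hv : ∀ w ≠ 0, v ⬝ᵥ A *ᵥ v ≤ w ⬝ᵥ A *ᵥ w)
    (hU : U.det = 1) {j : n} (hUv : ∀ i, U i j = v i) (w : n → ℤ) (hw : w ≠ 0) :
    (Uᵀ * A * U) j j ≤ w ⬝ᵥ (Uᵀ * A * U) *ᵥ w := by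
  have hUe : U *ᵥ Pi.single j 1 = v := by rw [mulVec_single_one]; exact funext hUv
  rw [← single_one_dotProduct_mulVec_single_one (Uᵀ * A * U), dotProduct_transpose_mul_mul_mulVec,
    dotProduct_transpose_mul_mul_mulVec, hUe]
  exact hv _ (mulVec_ne_zero_of_det_eq_one hU hw)

end Matrix

def IsPrimitiveVec {ι : Type*} (v : ι → ℤ) : Prop :=
  ∀ t : ℤ, (∀ i, t ∣ v i) → IsUnit t

theorem IsPrimitiveVec.isCoprime {v : Fin 2 → ℤ} (hv : IsPrimitiveVec v) :
    IsCoprime (v 0) (v 1) := by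
  refine IsRelPrime.isCoprime fun t h0 h1 => hv t ?_
  intro i
  fin_cases i <;> assumption

theorem exists_unimodular_col_fin_two {v : Fin 2 → ℤ} (hv : IsPrimitiveVec v) :
    ∃ U : Matrix (Fin 2) (Fin 2) ℤ, U.det = 1 ∧ ∀ i, U i 0 = v i := by
  obtain ⟨g, h0, h1⟩ := IsCoprime.exists_SL2_col hv.isCoprime 0
  exact ⟨g, g.det_coe, fun i => by fin_cases i <;> assumption⟩

theorem exists_unimodular_col_fin_three {v : Fin 3 → ℤ} (hv : IsPrimitiveVec v) :
    ∃ U : Matrix (Fin 3) (Fin 3) ℤ, U.det = 1 ∧ ∀ i, U i 0 = v i := by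
  obtain ⟨p, q, hp, hq, hpq⟩ := extract_gcd (v 0) (v 1)
  set G := gcd (v 0) (v 1)
  obtain ⟨α, β, hαβ⟩ : IsCoprime p q := (gcd_isUnit_iff_isRelPrime.mp hpq).isCoprime
  obtain ⟨γ, δ, hγδ⟩ : IsCoprime G (v 2) := by
    refine IsRelPrime.isCoprime fun t hG h2 => hv t fun i => ?_
    fin_cases i
    · exact hG.trans (gcd_dvd_left _ _)
    · exact hG.trans (gcd_dvd_right _ _)
    · exact h2
  refine ⟨!![v 0, -β, -δ * p; v 1, α, -δ * q; v 2, 0, γ], ?_, fun i => by fin_cases i <;> rfl⟩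
  simp [det_fin_three, hp, hq]
  linear_combination (γ * G + δ * v 2) * hαβ + hγδ

theorem Int.exists_abs_two_mul_mul_add_le {a : ℤ} (ha : 0 < a) (w : ℤ) :
    ∃ x : ℤ, |2 * (a * x + w)| ≤ a := by
  have h := Int.emod_add_mul_ediv (2 * w + a) (2 * a)
  have h0 := Int.emod_nonneg (2 * w + a) (by omega : 2 * a ≠ 0)
  have h1 := Int.emod_lt_of_pos (2 * w + a) (by omega : 0 < 2 * a)
  exact ⟨-((2 * w + a) / (2 * a)), abs_le.mpr ⟨by linarith, by linarith⟩⟩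

theorem three_mul_sq_le_of_forall_le {a b c : ℤ} (ha : 0 < a)
    (h : ∀ x : ℤ, a ≤ a * x ^ 2 + 2 * b * x + c) : 3 * a ^ 2 ≤ 4 * (a * c - b ^ 2) := by
  obtain ⟨x, hx⟩ := Int.exists_abs_two_mul_mul_add_le ha b
  have hx2 := sq_le_sq' (abs_le.mp hx).1 (abs_le.mp hx).2
  nlinarith [mul_le_mul_of_nonneg_left (h x) ha.le]

namespace Matrix.PosDef

section General

variable {n : Type*} [Fintype n] {A : Matrix n n ℤ}

theorem dotProduct_mulVec_pos' (hA : A.PosDef) {v : n → ℤ} (hv : v ≠ 0) :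
    0 < v ⬝ᵥ A *ᵥ v := by
  simpa using hA.dotProduct_mulVec_pos hv

omit [Fintype n] in
theorem apply_comm (hA : A.PosDef) (i j : n) : A i j = A j i := by
  simpa using (hA.isHermitian.apply i j).symm

theorem transpose_mul_mul_of_det_eq_one [DecidableEq n] (hA : A.PosDef) {U : Matrix n n ℤ}
    (hU : U.det = 1) : (Uᵀ * A * U).PosDef := by
  have hU' : IsUnit U := (isUnit_iff_isUnit_det _).mpr (by simp [hU])
  simpa [star_eq_conjTranspose] using (IsUnit.posDef_star_left_conjugate_iff hU').mpr hA

theorem exists_isPrimitiveVec_le [Nonempty n] (hA : A.PosDef) :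
    ∃ v, IsPrimitiveVec v ∧ ∀ w ≠ 0, v ⬝ᵥ A *ᵥ v ≤ w ⬝ᵥ A *ᵥ w := by
  obtain ⟨_, ⟨v, hv0, rfl⟩, hmin⟩ := Int.exists_least_of_bdd
    (P := fun z => ∃ v ≠ 0, v ⬝ᵥ A *ᵥ v = z)
    ⟨0, by rintro _ ⟨v, hv, rfl⟩; exact (hA.dotProduct_mulVec_pos' hv).le⟩ ⟨_, 1, one_ne_zero, rfl⟩
  obtain ⟨w, hvw, hw⟩ := Finset.univ.extract_gcd v Finset.univ_nonempty
  set t := Finset.univ.gcd v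
  have hv : v = t • w := funext fun i => hvw i (Finset.mem_univ i)
  have ht : t ≠ 0 := by rintro h; simp [hv, h] at hv0
  have hw0 : w ≠ 0 := by rintro rfl; simp [hv] at hv0
  have ht2 : 1 ≤ t ^ 2 := by
    have : 0 < t ^ 2 := by positivity
    omega
  refine ⟨w, fun d hd => isUnit_of_dvd_one (hw ▸ Finset.dvd_gcd fun i _ => hd i), fun u hu => ?_⟩
  calc w ⬝ᵥ A *ᵥ w ≤ t ^ 2 * (w ⬝ᵥ A *ᵥ w) :=
        le_mul_of_one_le_left (hA.dotProduct_mulVec_pos' hw0).le ht2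
    _ = v ⬝ᵥ A *ᵥ v := by rw [hv, smul_dotProduct_mulVec_smul]
    _ ≤ u ⬝ᵥ A *ᵥ u := hmin _ ⟨u, hu, rfl⟩

theorem exists_transpose_mul_mul_apply_le [Nonempty n] [DecidableEq n] (hA : A.PosDef) (j : n)
    (hcompl : ∀ v : n → ℤ, IsPrimitiveVec v → ∃ U : Matrix n n ℤ, U.det = 1 ∧ ∀ i, U i j = v i) :
    ∃ U : Matrix n n ℤ, U.det = 1 ∧ ∀ w ≠ 0, (Uᵀ * A * U) j j ≤ w ⬝ᵥ (Uᵀ * A * U) *ᵥ w := by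
  obtain ⟨v, hv, hmin⟩ := hA.exists_isPrimitiveVec_le
  obtain ⟨U, hU, hUv⟩ := hcompl v hv
  exact ⟨U, hU, transpose_mul_mul_apply_le_of_col_eq hmin hU hUv⟩

end General

section Binary

variable {B : Matrix (Fin 2) (Fin 2) ℤ}

theorem three_mul_sq_apply_zero_zero_le_det (hB : B.PosDef)
    (hmin : ∀ w ≠ 0, B 0 0 ≤ w ⬝ᵥ B *ᵥ w) : 3 * B 0 0 ^ 2 ≤ 4 * B.det := by
  rw [det_fin_two, hB.apply_comm 1 0, ← sq]
  refine three_mul_sq_le_of_forall_le hB.diag_pos fun x => ?_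
  have := hmin ![x, 1] (by simp [funext_iff, Fin.forall_fin_two])
  rw [dotProduct_mulVec_fin_two, hB.apply_comm 1 0] at this
  simpa [two_mul, add_mul] using this

theorem exists_three_mul_sq_le_det (hB : B.PosDef) :
    ∃ v ≠ 0, 3 * (v ⬝ᵥ B *ᵥ v) ^ 2 ≤ 4 * B.det := by
  obtain ⟨U, hU, hmin⟩ := hB.exists_transpose_mul_mul_apply_le 0
    fun _ hv => exists_unimodular_col_fin_two hv
  refine ⟨U *ᵥ Pi.single 0 1, mulVec_ne_zero_of_det_eq_one hU (by simp), ?_⟩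
  rw [← dotProduct_transpose_mul_mul_mulVec, single_one_dotProduct_mulVec_single_one,
    ← det_transpose_mul_mul_of_det_eq_one hU B]
  exact (hB.transpose_mul_mul_of_det_eq_one hU).three_mul_sq_apply_zero_zero_le_det hmin

theorem exists_sq_add_sq_of_det_eq_one (hB : B.PosDef) (hdet : B.det = 1) (v : Fin 2 → ℤ) :
    ∃ x y : ℤ, v ⬝ᵥ B *ᵥ v = x ^ 2 + y ^ 2 := by
  obtain ⟨U, hU, hmin⟩ := hB.exists_transpose_mul_mul_apply_le 0
    fun _ hv => exists_unimodular_col_fin_two hv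
  have hB' := hB.transpose_mul_mul_of_det_eq_one hU
  have hdet' := (det_transpose_mul_mul_of_det_eq_one hU B).trans hdet
  rw [← dotProduct_transpose_mul_mul_mulVec_inv hU]
  generalize Uᵀ * B * U = B' at hB' hdet' hmin ⊢
  generalize U⁻¹ *ᵥ v = w
  have h00 : B' 0 0 = 1 := by
    have := hB'.three_mul_sq_apply_zero_zero_le_det hmin
    nlinarith [hB'.diag_pos (i := 0)]
  refine ⟨w 0 + B' 0 1 * w 1, w 1, ?_⟩
  rw [det_fin_two, h00, hB'.apply_comm 1 0] at hdet'
  rw [dotProduct_mulVec_fin_two, hB'.apply_comm 1 0, h00]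
  linear_combination w 1 ^ 2 * hdet'

end Binary

end Matrix.PosDef

/-- `A 0 0` times the Schur complement of the entry `A 0 0`. -/
def Matrix.scaledSchurComplement (A : Matrix (Fin 3) (Fin 3) ℤ) : Matrix (Fin 2) (Fin 2) ℤ :=
  !![A 0 0 * A 1 1 - A 0 1 ^ 2, A 0 0 * A 1 2 - A 0 1 * A 0 2;
    A 0 0 * A 1 2 - A 0 1 * A 0 2, A 0 0 * A 2 2 - A 0 2 ^ 2]

namespace Matrix.PosDef

variable {A : Matrix (Fin 3) (Fin 3) ℤ}

theorem apply_zero_zero_mul_dotProduct_mulVec_cons (hA : A.PosDef) (x : ℤ) (u : Fin 2 → ℤ) :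
    A 0 0 * (vecCons x u ⬝ᵥ A *ᵥ vecCons x u) =
      (A 0 0 * x + A 0 1 * u 0 + A 0 2 * u 1) ^ 2 + u ⬝ᵥ A.scaledSchurComplement *ᵥ u := by
  rw [dotProduct_mulVec_fin_three, dotProduct_mulVec_fin_two, hA.apply_comm 1 0,
    hA.apply_comm 2 0, hA.apply_comm 2 1]
  simp [scaledSchurComplement]
  ring

theorem det_scaledSchurComplement (hA : A.PosDef) :
    A.scaledSchurComplement.det = A 0 0 * A.det := by
  rw [det_fin_three, hA.apply_comm 1 0, hA.apply_comm 2 0, hA.apply_comm 2 1,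
    scaledSchurComplement, det_fin_two_of]
  ring

theorem three_mul_sq_le_scaledSchurComplement (hA : A.PosDef)
    (hmin : ∀ w ≠ 0, A 0 0 ≤ w ⬝ᵥ A *ᵥ w) {u : Fin 2 → ℤ} (hu : u ≠ 0) :
    3 * A 0 0 ^ 2 ≤ 4 * (u ⬝ᵥ A.scaledSchurComplement *ᵥ u) := by
  have ha : 0 < A 0 0 := hA.diag_pos
  obtain ⟨x, hx⟩ := Int.exists_abs_two_mul_mul_add_le ha (A 0 1 * u 0 + A 0 2 * u 1)
  have hx2 := sq_le_sq' (abs_le.mp hx).1 (abs_le.mp hx).2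
  have hle := mul_le_mul_of_nonneg_left (hmin (vecCons x u) (by simp [hu])) ha.le
  rw [hA.apply_zero_zero_mul_dotProduct_mulVec_cons] at hle
  nlinarith

theorem posDef_scaledSchurComplement (hA : A.PosDef) (hmin : ∀ w ≠ 0, A 0 0 ≤ w ⬝ᵥ A *ᵥ w) :
    A.scaledSchurComplement.PosDef := by
  refine of_dotProduct_mulVec_pos (by ext i j; fin_cases i <;> fin_cases j <;> rfl) fun u hu => ?_
  have := hA.three_mul_sq_le_scaledSchurComplement hmin hu
  have := hA.diag_pos (i := 0)
  simp only [star_trivial]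
  nlinarith

theorem exists_sum_three_sq_of_apply_zero_zero_le (hA : A.PosDef) (hdet : A.det = 1)
    (hmin : ∀ w ≠ 0, A 0 0 ≤ w ⬝ᵥ A *ᵥ w) (v : Fin 3 → ℤ) :
    ∃ x y z : ℤ, v ⬝ᵥ A *ᵥ v = x ^ 2 + y ^ 2 + z ^ 2 := by
  have hH := hA.posDef_scaledSchurComplement hmin
  have hdetH := hA.det_scaledSchurComplement
  rw [hdet, mul_one] at hdetH
  have ha1 : A 0 0 = 1 := by
    obtain ⟨u, hu, hu3⟩ := hH.exists_three_mul_sq_le_det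
    have h1 := pow_le_pow_left₀ (by positivity) (hA.three_mul_sq_le_scaledSchurComplement hmin hu) 2
    have ha := hA.diag_pos (i := 0)
    rw [hdetH] at hu3
    generalize u ⬝ᵥ A.scaledSchurComplement *ᵥ u = μ at hu3 h1
    by_contra hne
    have h2 : 2 ≤ A 0 0 := by omega
    nlinarith [pow_le_pow_left₀ (by norm_num) h2 3]
  obtain ⟨y, z, hyz⟩ := hH.exists_sq_add_sq_of_det_eq_one (hdetH.trans ha1) (vecTail v)
  refine ⟨v 0 + A 0 1 * v 1 + A 0 2 * v 2, y, z, ?_⟩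
  have h := hA.apply_zero_zero_mul_dotProduct_mulVec_cons (vecHead v) (vecTail v)
  rw [cons_head_tail, ha1, one_mul, one_mul, hyz] at h
  rw [h]
  simp [vecHead, vecTail]
  ring

theorem exists_sum_three_sq_of_det_eq_one (hA : A.PosDef) (hdet : A.det = 1) (v : Fin 3 → ℤ) :
    ∃ x y z : ℤ, v ⬝ᵥ A *ᵥ v = x ^ 2 + y ^ 2 + z ^ 2 := by
  obtain ⟨U, hU, hmin⟩ := hA.exists_transpose_mul_mul_apply_le 0
    fun _ hv => exists_unimodular_col_fin_three hv
  rw [← dotProduct_transpose_mul_mul_mulVec_inv hU]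
  exact (hA.transpose_mul_mul_of_det_eq_one hU).exists_sum_three_sq_of_apply_zero_zero_le
    ((det_transpose_mul_mul_of_det_eq_one hU A).trans hdet) hmin _

end Matrix.PosDef

theorem posDef_of_det_eq_one {n k s N : ℤ} (hn : 0 < n) (hnk : 1 < n * k)
    (hdet : n * (k * N - s ^ 2) - N = 1) :
    (!![n, 1, 0; 1, k, -s; 0, -s, N] : Matrix (Fin 3) (Fin 3) ℤ).PosDef := by
  refine .of_dotProduct_mulVec_pos (by ext i j; fin_cases i <;> fin_cases j <;> rfl)
    fun w hw => ?_
  have key : (n * k - 1) * n * (star w ⬝ᵥ !![n, 1, 0; 1, k, -s; 0, -s, N] *ᵥ w) =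
      (n * k - 1) * (n * w 0 + w 1) ^ 2 + ((n * k - 1) * w 1 - n * s * w 2) ^ 2
        + n * w 2 ^ 2 := by
    rw [star_trivial, dotProduct_mulVec_fin_three]
    simp
    linear_combination (n * w 2 ^ 2) * hdet
  by_contra! hQ
  apply hw
  have hsum := key ▸ mul_nonpos_of_nonneg_of_nonpos (by nlinarith) hQ
  have t1 : 0 ≤ (n * k - 1) * (n * w 0 + w 1) ^ 2 := mul_nonneg (by omega) (sq_nonneg _)
  have t2 := sq_nonneg ((n * k - 1) * w 1 - n * s * w 2)
  have t3 : 0 ≤ n * w 2 ^ 2 := mul_nonneg hn.le (sq_nonneg _)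
  have h2 : w 2 = 0 := by
    have e := (mul_eq_zero.mp (by linarith : n * w 2 ^ 2 = 0)).resolve_left hn.ne'
    exact pow_eq_zero_iff two_ne_zero |>.mp e
  have h1 : w 1 = 0 := by
    have e : ((n * k - 1) * w 1 - n * s * w 2) ^ 2 = 0 := by linarith
    rw [pow_eq_zero_iff two_ne_zero, h2, mul_zero, sub_zero] at e
    exact (mul_eq_zero.mp e).resolve_left (by omega)
  have h0 : w 0 = 0 := by
    have e : (n * k - 1) * (n * w 0 + w 1) ^ 2 = 0 := by linarith
    rw [mul_eq_zero, pow_eq_zero_iff two_ne_zero, h1, add_zero, mul_eq_zero] at e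
    omega
  ext i
  fin_cases i <;> assumption

theorem exists_sum_three_sq_of_dvd_sq_add {n D s : ℤ} (hn : 0 < n) (hN : 0 < n * D - 1)
    (hdvd : n * D - 1 ∣ s ^ 2 + D) : ∃ x y z : ℤ, n = x ^ 2 + y ^ 2 + z ^ 2 := by
  obtain ⟨k, hk⟩ := hdvd
  generalize hN' : n * D - 1 = N at hN hk
  have hdet : n * (k * N - s ^ 2) - N = 1 := by linear_combination hN' - n * hk
  have hA := posDef_of_det_eq_one hn (by nlinarith [sq_nonneg s]) hdet
  obtain ⟨x, y, z, h⟩ := hA.exists_sum_three_sq_of_det_eq_one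
    (by simp [det_fin_three]; linear_combination hdet) (Pi.single 0 1)
  rw [single_one_dotProduct_mulVec_single_one] at h
  exact ⟨x, y, z, h⟩

theorem exists_dvd_sq_add_of_jacobiSym {p : ℕ} [Fact p.Prime] {n D : ℤ}
    (hnD : (p : ℤ) ∣ n * D - 1) (hJ : jacobiSym (-n) p = 1) : ∃ s : ℤ, (p : ℤ) ∣ s ^ 2 + D := by
  obtain ⟨r, hr⟩ := ZMod.isSquare_of_jacobiSym_eq_one hJ
  have hnD' := (ZMod.intCast_zmod_eq_zero_iff_dvd _ p).mpr hnD
  refine ⟨(r * D).valMinAbs, (ZMod.intCast_zmod_eq_zero_iff_dvd _ p).mp ?_⟩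
  push_cast at hr hnD' ⊢
  linear_combination (-(D : ZMod p) ^ 2) * hr - (D : ZMod p) * hnD'

theorem jacobiSym_neg_eq_of_mod_four_eq_one {n p : ℕ} (hn : Odd n) (hp : p % 4 = 1) :
    jacobiSym (-n) p = jacobiSym p n := by
  have hp' : Odd p := Nat.odd_iff.mpr (by omega)
  rw [neg_eq_neg_one_mul, jacobiSym.mul_left, jacobiSym.at_neg_one hp', ZMod.χ₄_nat_one_mod_four hp,
    one_mul, jacobiSym.quadratic_reciprocity_one_mod_four' hn hp]

theorem exists_dvd_sq_add_of_prime_modEq {n p : ℕ} (hp : p.Prime) (hpn : (p : ℤ) ≡ -1 [ZMOD n])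
    (hJ : jacobiSym (-n) p = 1) : ∃ D s : ℤ, 0 < n * D - 1 ∧ n * D - 1 ∣ s ^ 2 + D := by
  have : Fact p.Prime := ⟨hp⟩
  obtain ⟨D, hD⟩ := hpn.symm.dvd
  obtain ⟨s, hs⟩ := exists_dvd_sq_add_of_jacobiSym (D := D) ⟨1, by linarith⟩ hJ
  refine ⟨D, s, ?_, ?_⟩
  · have := hp.pos
    omega
  · rwa [show (n : ℤ) * D - 1 = p by linarith]

theorem exists_dvd_sq_add_of_mod_four_eq_one {n : ℕ} (hn : n % 4 = 1) :
    ∃ D s : ℤ, 0 < n * D - 1 ∧ n * D - 1 ∣ s ^ 2 + D := by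
  obtain ⟨t, rfl⟩ : ∃ t, n = 4 * t + 1 := ⟨n / 4, by omega⟩
  -- `p ≡ 1 (mod 4)` and `p ≡ -1 (mod n)`
  obtain ⟨p, -, hp, hpa⟩ := Nat.forall_exists_prime_gt_and_zmodEq 0 (q := 4 * (4 * t + 1))
    (a := 8 * t + 1) (by omega) ⟨8 * t + 1, -4 * t, by push_cast; ring⟩
  push_cast at hpa
  have hp4 : p % 4 = 1 := by have := hpa.of_mul_right _; unfold Int.ModEq at this; omega
  have hpn : (p : ℤ) ≡ -1 [ZMOD ↑(4 * t + 1)] :=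
    (hpa.of_mul_left 4).trans (Int.modEq_iff_dvd.mpr ⟨-2, by ring⟩)
  refine exists_dvd_sq_add_of_prime_modEq hp hpn ?_
  rw [jacobiSym_neg_eq_of_mod_four_eq_one ⟨2 * t, by ring⟩ hp4, jacobiSym.mod_left' hpn,
    jacobiSym.at_neg_one ⟨2 * t, by ring⟩, ZMod.χ₄_nat_one_mod_four (by omega)]

theorem exists_dvd_sq_add_of_mod_four_eq_two {n : ℕ} (hn : n % 4 = 2) :
    ∃ D s : ℤ, 0 < n * D - 1 ∧ n * D - 1 ∣ s ^ 2 + D := by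
  obtain ⟨t, rfl⟩ : ∃ t, n = 4 * t + 2 := ⟨n / 4, by omega⟩
  -- `p ≡ n - 1 (mod 8)` and `p ≡ -1 (mod n)`
  obtain ⟨p, -, hp, hpa⟩ := Nat.forall_exists_prime_gt_and_zmodEq 0 (q := 8 * (2 * t + 1))
    (a := 4 * t + 1) (by omega) ⟨4 * t + 1, -t, by push_cast; ring⟩
  push_cast at hpa
  have hp8 : p % 8 = (4 * t + 1) % 8 := by
    have := hpa.of_mul_right _; unfold Int.ModEq at this; omega
  have hpn : (p : ℤ) ≡ -1 [ZMOD ↑(4 * t + 2)] :=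
    (hpa.of_dvd ⟨4, by push_cast; ring⟩).trans (Int.modEq_iff_dvd.mpr ⟨-1, by push_cast; ring⟩)
  refine exists_dvd_sq_add_of_prime_modEq hp hpn ?_
  have hodd : Odd (2 * t + 1) := ⟨t, rfl⟩
  rw [show -((4 * t + 2 : ℕ) : ℤ) = 2 * -((2 * t + 1 : ℕ) : ℤ) by push_cast; ring,
    jacobiSym.mul_left, jacobiSym_neg_eq_of_mod_four_eq_one hodd (by omega),
    jacobiSym.mod_left' (hpn.of_dvd ⟨2, by push_cast; ring⟩),
    jacobiSym.at_two (Nat.odd_iff.mpr (by omega)),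
    jacobiSym.at_neg_one hodd, ZMod.χ₈_nat_mod_eight, ZMod.χ₄_nat_mod_four]
  rcases Nat.even_or_odd t with ⟨u, rfl⟩ | ⟨u, rfl⟩
  · rw [show p % 8 = 1 by omega, show (2 * (u + u) + 1) % 4 = 1 by omega]
    rfl
  · rw [show p % 8 = 5 by omega, show (2 * (2 * u + 1) + 1) % 4 = 3 by omega]
    rfl

theorem exists_two_mul_dvd_sq_add {p D s : ℤ} (hp : Odd p) (hD : Odd D) (hs : p ∣ s ^ 2 + D) :
    ∃ s', 2 * p ∣ s' ^ 2 + D := by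
  -- `s + p * (s + 1)` is odd and congruent to `s` modulo `p`
  refine ⟨s + p * (s + 1), IsCoprime.mul_dvd ?_ ?_ ?_⟩
  · obtain ⟨j, rfl⟩ := hp
    exact ⟨-j, 1, by ring⟩
  · refine even_iff_two_dvd.mp (Odd.add_odd (Odd.pow ?_) hD)
    rcases Int.even_or_odd s with h | h <;> simp [h, hp, parity_simps]
  · obtain ⟨c, hc⟩ := hs
    exact ⟨c + (s + 1) * (2 * s + p * (s + 1)), by linear_combination hc⟩

theorem jacobiSym_four_mul_add_one_eight_mul_add_three (t : ℕ) :
    jacobiSym (4 * t + 1) (8 * t + 3) = 1 := by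
  have hodd : Odd (8 * t + 3) := ⟨4 * t + 1, by ring⟩
  have h := jacobiSym.mul_left 2 (4 * t + 1) (8 * t + 3)
  rw [jacobiSym.mod_left' (a₂ := -1) (Int.modEq_iff_dvd.mpr ⟨-1, by push_cast; ring⟩),
    jacobiSym.at_neg_one hodd, jacobiSym.at_two hodd, ZMod.χ₄_nat_mod_four,
    ZMod.χ₈_nat_mod_eight, show (8 * t + 3) % 4 = 3 by omega,
    show (8 * t + 3) % 8 = 3 by omega] at h
  have h4 : ZMod.χ₄ (3 : ℕ) = -1 := by decide
  have h8 : ZMod.χ₈ (3 : ℕ) = -1 := by decide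
  rw [h4, h8] at h
  linarith

theorem exists_dvd_sq_add_of_mod_eight_eq_three {n : ℕ} (hn : n % 8 = 3) :
    ∃ D s : ℤ, 0 < n * D - 1 ∧ n * D - 1 ∣ s ^ 2 + D := by
  obtain ⟨t, rfl⟩ : ∃ t, n = 8 * t + 3 := ⟨n / 8, by omega⟩
  -- `p ≡ 1 (mod 4)` and `2p + 1 ≡ 0 (mod n)`; then `N = 2p`
  obtain ⟨p, -, hp, hpa⟩ := Nat.forall_exists_prime_gt_and_zmodEq 0 (q := 4 * (8 * t + 3))
    (a := 4 * t + 1) (by omega) ⟨8 * t + 1, -t, by push_cast; ring⟩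
  have : Fact p.Prime := ⟨hp⟩
  push_cast at hpa
  have hp4 : p % 4 = 1 := by have := hpa.of_mul_right _; unfold Int.ModEq at this; omega
  have hpn : (p : ℤ) ≡ 4 * t + 1 [ZMOD ↑(8 * t + 3)] := by push_cast; exact hpa.of_mul_left 4
  have hodd : Odd (8 * t + 3) := ⟨4 * t + 1, by ring⟩
  have hJ' : jacobiSym (-((8 * t + 3 : ℕ) : ℤ)) p = 1 := by
    rw [jacobiSym_neg_eq_of_mod_four_eq_one hodd hp4, jacobiSym.mod_left' hpn,
      jacobiSym_four_mul_add_one_eight_mul_add_three]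
  have h2p : 2 * (p : ℤ) + 1 ≡ 0 [ZMOD ↑(8 * t + 3)] :=
    ((hpn.mul_left 2).add_right 1).trans (Int.modEq_iff_dvd.mpr ⟨-1, by push_cast; ring⟩)
  obtain ⟨D, hD⟩ := Int.modEq_zero_iff_dvd.mp h2p
  obtain ⟨s, hs⟩ := exists_dvd_sq_add_of_jacobiSym (D := D) ⟨2, by linarith⟩ hJ'
  have hDodd : Odd D := (Int.odd_mul.mp (hD ▸ odd_two_mul_add_one (p : ℤ))).2
  obtain ⟨s', hs'⟩ := exists_two_mul_dvd_sq_add (Int.odd_iff.mpr (by omega)) hDodd hs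
  refine ⟨D, s', ?_, ?_⟩
  · have := hp.pos
    omega
  · rwa [show ((8 * t + 3 : ℕ) : ℤ) * D - 1 = 2 * p by linarith]

theorem Nat.sum_three_squares_of_mod {n : ℕ} (hn : n % 4 = 1 ∨ n % 4 = 2 ∨ n % 8 = 3) :
    ∃ a b c : ℕ, a ^ 2 + b ^ 2 + c ^ 2 = n := by
  obtain ⟨D, s, hN, hdvd⟩ : ∃ D s : ℤ, 0 < n * D - 1 ∧ n * D - 1 ∣ s ^ 2 + D := by
    rcases hn with h | h | h
    exacts [exists_dvd_sq_add_of_mod_four_eq_one h, exists_dvd_sq_add_of_mod_four_eq_two h,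
      exists_dvd_sq_add_of_mod_eight_eq_three h]
  obtain ⟨x, y, z, h⟩ := exists_sum_three_sq_of_dvd_sq_add (n := n) (by omega) hN hdvd
  refine ⟨x.natAbs, y.natAbs, z.natAbs, ?_⟩
  zify
  simp [h]

theorem Int.sum_three_squares_of_mod {n : ℤ} (h0 : 0 ≤ n)
    (hn : n % 4 = 1 ∨ n % 4 = 2 ∨ n % 8 = 3) :
    ∃ x y z : ℤ, 0 ≤ x ∧ 0 ≤ y ∧ 0 ≤ z ∧ n = x ^ 2 + y ^ 2 + z ^ 2 := by
  lift n to ℕ using h0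
  obtain ⟨a, b, c, h⟩ := Nat.sum_three_squares_of_mod (n := n) (by omega)
  exact ⟨a, b, c, by positivity, by positivity, by positivity, by exact_mod_cast h.symm⟩

theorem stmt_8 (m : ℤ) (hm : 50 ≤ m) :
    (∃ x y z : ℤ, 0 ≤ x ∧ 0 ≤ y ∧ 0 ≤ z ∧ m - 15 = x^2 + y^2 + z^2) ∨
    (∃ x y z : ℤ, 0 ≤ x ∧ 0 ≤ y ∧ 0 ≤ z ∧ 2 * m - 99 = x^2 + y^2 + z^2) := by
  by_cases h : m % 4 = 0 ∨ m % 4 = 1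
  · exact .inl (Int.sum_three_squares_of_mod (by omega) (by omega))
  · exact .inr (Int.sum_three_squares_of_mod (by omega) (by omega))
end
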